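/- Let G be a nontrivial additive subgroup of ℂ and let · be a transposed Poisson structure on the deformed generalized Heisenberg–Virasoro algebra g(G,−1). Then there exists β ∈ ℂ such that I_0 · I_0 = β C_L and the product of every other pair of basis elements is zero; i.e., L_a · L_b = 0, L_a · I_b = 0, L_a · C_L = 0, I_a · C_L = 0, C_L · C_L = 0 for all a, b ∈ G, and I_a · I_b = 0 unless a = b = 0. -/

import Mathlib

/-!
Each left multiplication `x ↦ z · x` of a transposed Poisson structure is a ½-derivation of the
Lie algebra, so the point is to compute the ½-derivations `φ` of `g(G, -1)`. The algebra is graded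
by the eigenvalues of `ad L₀`. Comparing weights shows that `φ L₀` lies in the span of `L₀, I₀, C_L`,
and the `I₀`-coordinate of the identity for `⁅L_g, L_{-g}⁆` removes `I₀`. After subtracting a
multiple of the identity, `φ L₀` is central, so `φ` doubles weights; then `φ` kills every bracket
of two vectors of non-zero weight, hence every `L_b`, `I_b` with `b ≠ 0`, and what remains is
`φ = A • id + r • (x ↦ x_{I₀} C_L)`. Commutativity of the product forces `A = 0` and
`z · w = β z_{I₀} w_{I₀} C_L`.
-/

open scoped Classical

/-- Index set for the basis of the deformed generalized Heisenberg–Virasoro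
algebra `g(G, -1)`: vectors `L a`, `I a` for `a ∈ G` together with the
central element `C_L`. -/
inductive DGHVIdx (G : AddSubgroup ℂ) : Type
  | L : G → DGHVIdx G
  | I : G → DGHVIdx G
  | CL : DGHVIdx G

theorem Module.Basis.eq_smul_of_repr_eq_zero {ι R M : Type*} [Semiring R] [AddCommMonoid M]
    [Module R M] (b : Module.Basis ι R M) {u : M} {i : ι} (h : ∀ j ≠ i, b.repr u j = 0) :
    u = b.repr u i • b i := by
  apply b.repr.injective
  ext j
  by_cases hj : j = i
  · subst hj; simp
  · simp [h j hj, Ne.symm hj]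

theorem Module.Basis.repr_lie_eq_mul_repr {ι R L : Type*} [CommRing R] [LieRing L]
    [LieAlgebra R L] (b : Module.Basis ι R L) {x : L} {i k : ι} {c : R}
    (h : ∀ j, b.repr ⁅x, b j⁆ i = c * b.repr (b j) k) (u : L) :
    b.repr ⁅x, u⁆ i = c * b.repr u k := by
  have : b.coord i ∘ₗ LieAlgebra.ad R L x = c • b.coord k := b.ext fun j => by simpa using h j
  simpa using LinearMap.congr_fun this u

theorem Module.End.eq_zero_of_eq_add_eigenvectors {K V : Type*} [Field K] [AddCommGroup V]
    [Module K V] (f : Module.End K V) {u v₁ v₂ : V} {μ μ₁ μ₂ : K} (hu : f u = μ • u)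
    (hv₁ : f v₁ = μ₁ • v₁) (hv₂ : f v₂ = μ₂ • v₂) (h₁ : μ₁ ≠ μ) (h₂ : μ₂ ≠ μ)
    (huv : u = v₁ + v₂) : u = 0 := by
  have hsup : u ∈ ⨆ (ν) (_ : ν ≠ μ), f.eigenspace ν := by
    rw [huv]
    exact add_mem
      (le_iSup₂ (f := fun ν (_ : ν ≠ μ) => f.eigenspace ν) μ₁ h₁ (mem_eigenspace_iff.2 hv₁))
      (le_iSup₂ (f := fun ν (_ : ν ≠ μ) => f.eigenspace ν) μ₂ h₂ (mem_eigenspace_iff.2 hv₂))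
  exact (Submodule.disjoint_def.1 (f.eigenspaces_iSupIndep μ)) u
    (mem_eigenspace_iff.2 hu) hsup

section HalfDerivation

variable {K L : Type*} [CommRing K] [LieRing L] [LieAlgebra K L]

def IsHalfDerivation (φ : L →ₗ[K] L) : Prop :=
  ∀ x y : L, (2 : K) • φ ⁅x, y⁆ = ⁅φ x, y⁆ + ⁅x, φ y⁆

theorem lie_lie_eq_smul_of_eigen {h x y : L} {μ₁ μ₂ : K} (hx : ⁅h, x⁆ = μ₁ • x)
    (hy : ⁅h, y⁆ = μ₂ • y) : ⁅h, ⁅x, y⁆⁆ = (μ₁ + μ₂) • ⁅x, y⁆ := by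
  rw [leibniz_lie, hx, hy, smul_lie, lie_smul, add_smul]

namespace IsHalfDerivation

variable {φ : L →ₗ[K] L}

theorem sub_smul_id (hφ : IsHalfDerivation φ) (c : K) :
    IsHalfDerivation (φ - c • LinearMap.id) := by
  intro x y
  simp only [LinearMap.sub_apply, LinearMap.smul_apply, LinearMap.id_apply, sub_lie, lie_sub,
    smul_lie, lie_smul, smul_sub, hφ x y]
  module

theorem lie_apply_eq_zero {z : L} (hφ : IsHalfDerivation φ) (hz : ∀ y : L, ⁅z, y⁆ = 0) (y : L) :
    ⁅φ z, y⁆ = 0 := by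
  simpa [hz] using (hφ z y).symm

theorem lie_apply_eq_smul {h y : L} {μ : K} (hφ : IsHalfDerivation φ)
    (hh : ∀ z : L, ⁅φ h, z⁆ = 0) (hy : ⁅h, y⁆ = μ • y) : ⁅h, φ y⁆ = (2 * μ) • φ y := by
  have := hφ h y
  rw [hy, map_smul, hh, zero_add, smul_smul] at this
  exact this.symm

end IsHalfDerivation

-- `2 • φ ⁅x, y⁆`, `⁅φ x, y⁆` and `⁅x, φ y⁆` are eigenvectors of `ad h` for the eigenvalues
-- `2 (μ₁ + μ₂)`, `2 μ₁ + μ₂` and `μ₁ + 2 μ₂`.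
theorem IsHalfDerivation.apply_lie_eq_zero {K L : Type*} [Field K] [NeZero (2 : K)] [LieRing L]
    [LieAlgebra K L] {φ : L →ₗ[K] L} {h x y : L} {μ₁ μ₂ : K} (hφ : IsHalfDerivation φ)
    (hh : ∀ z : L, ⁅φ h, z⁆ = 0) (hx : ⁅h, x⁆ = μ₁ • x) (hy : ⁅h, y⁆ = μ₂ • y)
    (hμ₁ : μ₁ ≠ 0) (hμ₂ : μ₂ ≠ 0) : φ ⁅x, y⁆ = 0 := by
  have hxy := hφ.lie_apply_eq_smul hh (lie_lie_eq_smul_of_eigen hx hy)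
  have key := (LieAlgebra.ad K L h).eq_zero_of_eq_add_eigenvectors
    (u := (2 : K) • φ ⁅x, y⁆) (μ := 2 * (μ₁ + μ₂))
    (by simp [hxy, smul_comm (2 : K)])
    (lie_lie_eq_smul_of_eigen (hφ.lie_apply_eq_smul hh hx) hy)
    (lie_lie_eq_smul_of_eigen hx (hφ.lie_apply_eq_smul hh hy))
    (by intro h; apply hμ₂; linear_combination -h)
    (by intro h; apply hμ₁; linear_combination -h) (hφ x y)
  exact (smul_eq_zero.1 key).resolve_left two_ne_zero

end HalfDerivation

def DGHVIdx.weight {G : AddSubgroup ℂ} : DGHVIdx G → ℂ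
  | .L a => a
  | .I a => a
  | .CL => 0

structure IsDGHVBasis {G : AddSubgroup ℂ} {Lg : Type*} [LieRing Lg] [LieAlgebra ℂ Lg]
    (bas : Module.Basis (DGHVIdx G) ℂ Lg) : Prop where
  lie_L_L : ∀ a b : G, ⁅bas (DGHVIdx.L a), bas (DGHVIdx.L b)⁆ =
    ((b : ℂ) - (a : ℂ)) • bas (DGHVIdx.L (a + b)) +
      (if a + b = 0 then ((a : ℂ) ^ 3 - (a : ℂ)) / 12 else 0) • bas DGHVIdx.CL
  lie_L_I : ∀ a b : G, ⁅bas (DGHVIdx.L a), bas (DGHVIdx.I b)⁆ =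
    ((a : ℂ) + (b : ℂ)) • bas (DGHVIdx.I (a + b))
  lie_I_I : ∀ a b : G, ⁅bas (DGHVIdx.I a), bas (DGHVIdx.I b)⁆ = 0
  lie_CL : ∀ x : Lg, ⁅bas DGHVIdx.CL, x⁆ = 0

namespace IsDGHVBasis

variable {G : AddSubgroup ℂ} {Lg : Type*} [LieRing Lg] [LieAlgebra ℂ Lg]
  {bas : Module.Basis (DGHVIdx G) ℂ Lg}

theorem lie_L_zero (hB : IsDGHVBasis bas) (j : DGHVIdx G) :
    ⁅bas (.L 0), bas j⁆ = j.weight • bas j := by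
  cases j with
  | L b => simp [hB.lie_L_L, DGHVIdx.weight]
  | I b => simp [hB.lie_L_I, DGHVIdx.weight]
  | CL => rw [← lie_skew, hB.lie_CL]; simp [DGHVIdx.weight]

theorem repr_lie_L_zero (hB : IsDGHVBasis bas) (u : Lg) (i : DGHVIdx G) :
    bas.repr ⁅bas (.L 0), u⁆ i = i.weight * bas.repr u i := by
  refine bas.repr_lie_eq_mul_repr (fun j => ?_) u
  by_cases hj : j = i
  · subst hj; simp [hB.lie_L_zero]
  · simp [hB.lie_L_zero, hj]

theorem repr_lie_L_L (hB : IsDGHVBasis bas) (b i : G) (u : Lg) :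
    bas.repr ⁅bas (.L b), u⁆ (.L i) = ((i : ℂ) - 2 * b) * bas.repr u (.L (i - b)) := by
  refine bas.repr_lie_eq_mul_repr (fun j => ?_) u
  cases j with
  | L c =>
    by_cases hc : c = i - b
    · subst hc
      simp only [hB.lie_L_L, add_sub_cancel]
      split_ifs <;> simp <;> ring
    · have : b + c ≠ i := fun h => hc (by rw [← h]; abel)
      rw [hB.lie_L_L]; split_ifs <;> simp [hc, this]
  | I c => simp [hB.lie_L_I]
  | CL => rw [← lie_skew, hB.lie_CL]; simp

theorem repr_lie_L_I (hB : IsDGHVBasis bas) (b i : G) (u : Lg) :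
    bas.repr ⁅bas (.L b), u⁆ (.I i) = i * bas.repr u (.I (i - b)) := by
  refine bas.repr_lie_eq_mul_repr (fun j => ?_) u
  cases j with
  | L c => rw [hB.lie_L_L]; split_ifs <;> simp
  | I c =>
    by_cases hc : c = i - b
    · subst hc
      simp [hB.lie_L_I]
    · have : b + c ≠ i := fun h => hc (by rw [← h]; abel)
      simp [hB.lie_L_I, hc, this]
  | CL => rw [← lie_skew, hB.lie_CL]; simp

theorem repr_lie_I_I (hB : IsDGHVBasis bas) (b i : G) (u : Lg) :
    bas.repr ⁅bas (.I b), u⁆ (.I i) = -i * bas.repr u (.L (i - b)) := by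
  refine bas.repr_lie_eq_mul_repr (fun j => ?_) u
  cases j with
  | L c =>
    rw [← lie_skew, hB.lie_L_I]
    by_cases hc : c = i - b
    · subst hc
      simp
    · have : c + b ≠ i := fun h => hc (by rw [← h]; abel)
      simp [hc, this]
  | I c => simp [hB.lie_I_I]
  | CL => rw [← lie_skew, hB.lie_CL]; simp

theorem eq_smul_CL_of_lie_eq_zero (hB : IsDGHVBasis bas) {g : G} (hg : g ≠ 0) {u : Lg}
    (h0 : ⁅bas (.L 0), u⁆ = 0) (hgu : ⁅bas (.L g), u⁆ = 0) :
    u = bas.repr u .CL • bas .CL := by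
  have hg' : (g : ℂ) ≠ 0 := by simpa using hg
  refine bas.eq_smul_of_repr_eq_zero fun j hj => ?_
  cases j with
  | L a =>
    by_cases ha : a = 0
    · subst ha
      have := congr_arg (bas.repr · (.L g)) hgu
      simp only [hB.repr_lie_L_L, sub_self, map_zero, Finsupp.coe_zero, Pi.zero_apply] at this
      exact (mul_eq_zero.1 this).resolve_left fun h => hg' (by linear_combination -h)
    · simpa [hB.repr_lie_L_zero, DGHVIdx.weight, ha] using congr_arg (bas.repr · (.L a)) h0
  | I a =>
    by_cases ha : a = 0
    · subst ha
      simpa [hB.repr_lie_L_I, hg] using congr_arg (bas.repr · (.I g)) hgu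
    · simpa [hB.repr_lie_L_zero, DGHVIdx.weight, ha] using congr_arg (bas.repr · (.I a)) h0
  | CL => exact absurd rfl hj

section HalfDerivation

variable {φ : Lg →ₗ[ℂ] Lg}

-- The `i`-coordinate of the ½-derivation identity for `(L₀, bas j)` reads
-- `(2 wt j - wt i) φ(bas j)ᵢ = ⁅φ L₀, bas j⁆ᵢ`.
theorem repr_lie_apply_L_zero_eq_zero (hB : IsDGHVBasis bas) (hφ : IsHalfDerivation φ)
    {i j : DGHVIdx G} (hij : i.weight = 2 * j.weight) :
    bas.repr ⁅φ (bas (.L 0)), bas j⁆ i = 0 := by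
  have := congr_arg (bas.repr · i) (hφ (bas (.L 0)) (bas j))
  simp only [hB.lie_L_zero, map_smul, map_add, Finsupp.add_apply, Finsupp.smul_apply,
    smul_eq_mul, hB.repr_lie_L_zero, hij] at this
  linear_combination -this

theorem repr_apply_L_zero_of_ne_zero (hB : IsDGHVBasis bas) (hφ : IsHalfDerivation φ)
    {b : G} (hb : b ≠ 0) :
    bas.repr (φ (bas (.L 0))) (.L b) = 0 ∧ bas.repr (φ (bas (.L 0))) (.I b) = 0 := by
  have hb2 : ((b + b : G) : ℂ) ≠ 0 := by simpa [← two_nsmul] using hb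
  have hw : (DGHVIdx.I (b + b)).weight = 2 * (DGHVIdx.L b).weight := by
    simp [DGHVIdx.weight]; ring
  have hL := hB.repr_lie_apply_L_zero_eq_zero hφ (j := .I b) hw
  have hI := hB.repr_lie_apply_L_zero_eq_zero hφ (j := .L b) hw
  rw [← lie_skew, map_neg, Finsupp.neg_apply, hB.repr_lie_I_I, add_sub_cancel_right] at hL
  rw [← lie_skew, map_neg, Finsupp.neg_apply, hB.repr_lie_L_I, add_sub_cancel_right] at hI
  simp only [neg_mul, neg_neg, neg_eq_zero, mul_eq_zero, hb2, false_or] at hL hI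
  exact ⟨hL, hI⟩

variable [Nontrivial G]

theorem apply_CL_eq_smul_CL (hB : IsDGHVBasis bas) (hφ : IsHalfDerivation φ) :
    φ (bas .CL) = bas.repr (φ (bas .CL)) .CL • bas .CL := by
  obtain ⟨g, hg⟩ := exists_ne (0 : G)
  have hc := hφ.lie_apply_eq_zero hB.lie_CL
  exact hB.eq_smul_CL_of_lie_eq_zero hg (by rw [← lie_skew, hc, neg_zero])
    (by rw [← lie_skew, hc, neg_zero])

theorem repr_apply_L_zero_I_zero (hB : IsDGHVBasis bas) (hφ : IsHalfDerivation φ) :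
    bas.repr (φ (bas (.L 0))) (.I 0) = 0 := by
  obtain ⟨g, hg⟩ := exists_ne (0 : G)
  have hg' : (g : ℂ) ≠ 0 := by simpa using hg
  have hCI : bas.repr (φ (bas .CL)) (.I 0) = 0 := by
    rw [hB.apply_CL_eq_smul_CL hφ]; simp
  have h₁ : bas.repr ⁅φ (bas (.L g)), bas (.L (-g))⁆ (.I 0) = 0 := by
    rw [← lie_skew, map_neg, Finsupp.neg_apply, hB.repr_lie_L_I]; simp
  have h₂ : bas.repr ⁅bas (.L g), φ (bas (.L (-g)))⁆ (.I 0) = 0 := by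
    rw [hB.repr_lie_L_I]; simp
  have := congr_arg (bas.repr · (.I 0)) (hφ (bas (.L g)) (bas (.L (-g))))
  rw [hB.lie_L_L, add_neg_cancel, if_pos rfl] at this
  simp only [map_add, map_smul, Finsupp.add_apply, Finsupp.smul_apply, smul_eq_mul, h₁, h₂,
    hCI] at this
  push_cast at this
  refine (mul_eq_zero.1 ?_).resolve_left hg'
  linear_combination -this / 4

theorem apply_L_zero_eq_smul_CL (hB : IsDGHVBasis bas) (hφ : IsHalfDerivation φ)
    (h0 : bas.repr (φ (bas (.L 0))) (.L 0) = 0) :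
    φ (bas (.L 0)) = bas.repr (φ (bas (.L 0))) .CL • bas .CL := by
  refine bas.eq_smul_of_repr_eq_zero fun j hj => ?_
  cases j with
  | L a =>
    by_cases ha : a = 0
    · exact ha ▸ h0
    · exact (hB.repr_apply_L_zero_of_ne_zero hφ ha).1
  | I a =>
    by_cases ha : a = 0
    · exact ha ▸ hB.repr_apply_L_zero_I_zero hφ
    · exact (hB.repr_apply_L_zero_of_ne_zero hφ ha).2
  | CL => exact absurd rfl hj

theorem lie_apply_L_zero_eq_zero (hB : IsDGHVBasis bas) (hφ : IsHalfDerivation φ)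
    (h0 : bas.repr (φ (bas (.L 0))) (.L 0) = 0) (y : Lg) : ⁅φ (bas (.L 0)), y⁆ = 0 := by
  rw [hB.apply_L_zero_eq_smul_CL hφ h0, smul_lie, hB.lie_CL, smul_zero]

theorem apply_L_eq_zero (hB : IsDGHVBasis bas) (hφ : IsHalfDerivation φ)
    (h0 : bas.repr (φ (bas (.L 0))) (.L 0) = 0) {b : G} (hb : b ≠ 0) :
    φ (bas (.L b)) = 0 := by
  have hb' : (b : ℂ) ≠ 0 := by simpa using hb
  have := hφ.apply_lie_eq_zero (hB.lie_apply_L_zero_eq_zero hφ h0)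
    (hB.lie_L_zero (.L (b + b))) (hB.lie_L_zero (.L (-b)))
    (by simpa [DGHVIdx.weight, ← two_mul] using hb') (by simpa [DGHVIdx.weight] using hb')
  rw [hB.lie_L_L, add_neg_cancel_right, if_neg hb, zero_smul, add_zero, map_smul,
    smul_eq_zero] at this
  refine this.resolve_left ?_
  push_cast
  exact fun h => hb' (by linear_combination -h / 3)

theorem apply_I_eq_zero (hB : IsDGHVBasis bas) (hφ : IsHalfDerivation φ)
    (h0 : bas.repr (φ (bas (.L 0))) (.L 0) = 0) {b : G} (hb : b ≠ 0) :
    φ (bas (.I b)) = 0 := by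
  have hb' : (b : ℂ) ≠ 0 := by simpa using hb
  have := hφ.apply_lie_eq_zero (hB.lie_apply_L_zero_eq_zero hφ h0)
    (hB.lie_L_zero (.L (b + b))) (hB.lie_L_zero (.I (-b)))
    (by simpa [DGHVIdx.weight, ← two_mul] using hb') (by simpa [DGHVIdx.weight] using hb')
  rw [hB.lie_L_I, add_neg_cancel_right, map_smul, smul_eq_zero] at this
  refine this.resolve_left ?_
  push_cast
  exact fun h => hb' (by linear_combination h)

theorem apply_L_zero_eq_zero_and_apply_CL_eq_zero (hB : IsDGHVBasis bas)
    (hφ : IsHalfDerivation φ) (h0 : bas.repr (φ (bas (.L 0))) (.L 0) = 0) :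
    φ (bas (.L 0)) = 0 ∧ φ (bas .CL) = 0 := by
  have hL0 := hB.apply_L_zero_eq_smul_CL hφ h0
  have hC := hB.apply_CL_eq_smul_CL hφ
  set s := bas.repr (φ (bas (.L 0))) .CL
  set c := bas.repr (φ (bas .CL)) .CL
  have key : ∀ a : G, a ≠ 0 → -2 * (a : ℂ) * s + ((a : ℂ) ^ 3 - a) / 12 * c = 0 := by
    intro a ha
    have ha' : (a : ℂ) ≠ 0 := by simpa using ha
    have := hφ.apply_lie_eq_zero (hB.lie_apply_L_zero_eq_zero hφ h0)
      (hB.lie_L_zero (.L a)) (hB.lie_L_zero (.L (-a)))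
      (by simpa [DGHVIdx.weight] using ha') (by simpa [DGHVIdx.weight] using ha')
    rw [hB.lie_L_L, add_neg_cancel, if_pos rfl, map_add, map_smul, map_smul, hL0, hC] at this
    have := congr_arg (bas.repr · .CL) this
    simp only [map_add, map_smul, Finsupp.add_apply, Finsupp.smul_apply, smul_eq_mul,
      Module.Basis.repr_self, Finsupp.single_eq_same, map_zero, Finsupp.coe_zero,
      Pi.zero_apply] at this
    push_cast at this
    linear_combination this
  obtain ⟨g, hg⟩ := exists_ne (0 : G)
  have hg' : (g : ℂ) ≠ 0 := by simpa using hg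
  have k₁ := key g hg
  have k₂ := key (g + g) (by simpa [← two_nsmul] using hg)
  push_cast at k₂
  have hc : c = 0 := by
    refine (mul_eq_zero.1 ?_).resolve_left (pow_ne_zero 3 hg')
    linear_combination 2 * k₂ - 4 * k₁
  have hs : s = 0 := by
    refine (mul_eq_zero.1 ?_).resolve_left hg'
    linear_combination -k₁ / 2 + ((g : ℂ) ^ 3 - g) / 24 * hc
  rw [hL0, hC, hs, hc, zero_smul]
  exact ⟨rfl, rfl⟩

theorem apply_I_zero_eq_smul_CL (hB : IsDGHVBasis bas) (hφ : IsHalfDerivation φ)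
    (h0 : bas.repr (φ (bas (.L 0))) (.L 0) = 0) :
    φ (bas (.I 0)) = bas.repr (φ (bas (.I 0))) .CL • bas .CL := by
  obtain ⟨g, hg⟩ := exists_ne (0 : G)
  refine hB.eq_smul_CL_of_lie_eq_zero hg ?_ ?_
  · simpa [DGHVIdx.weight] using
      hφ.lie_apply_eq_smul (hB.lie_apply_L_zero_eq_zero hφ h0) (hB.lie_L_zero (.I 0))
  · have := hφ (bas (.L g)) (bas (.I 0))
    rw [hB.lie_L_I, add_zero, map_smul, hB.apply_I_eq_zero hφ h0 hg,
      hB.apply_L_eq_zero hφ h0 hg, zero_lie, smul_zero, smul_zero, zero_add] at this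
    exact this.symm

theorem eq_smul_coord_smulRight (hB : IsDGHVBasis bas)
    (hφ : IsHalfDerivation φ) (h0 : bas.repr (φ (bas (.L 0))) (.L 0) = 0) :
    φ = bas.repr (φ (bas (.I 0))) .CL • (bas.coord (.I 0)).smulRight (bas .CL) := by
  obtain ⟨hL0, hC⟩ := hB.apply_L_zero_eq_zero_and_apply_CL_eq_zero hφ h0
  refine bas.ext fun j => ?_
  cases j with
  | L b =>
    by_cases hb : b = 0
    · subst hb; simp [hL0]
    · simp [hB.apply_L_eq_zero hφ h0 hb]
  | I b =>
    by_cases hb : b = 0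
    · subst hb; conv_lhs => rw [hB.apply_I_zero_eq_smul_CL hφ h0]
      simp
    · simp [hB.apply_I_eq_zero hφ h0 hb, hb]
  | CL => simp [hC]

theorem exists_eq_of_isHalfDerivation (hB : IsDGHVBasis bas) (hφ : IsHalfDerivation φ) :
    ∃ A r : ℂ, φ = A • LinearMap.id + r • (bas.coord (.I 0)).smulRight (bas .CL) := by
  set A := bas.repr (φ (bas (.L 0))) (.L 0)
  refine ⟨A, _, sub_eq_iff_eq_add'.1 <|
    hB.eq_smul_coord_smulRight (hφ.sub_smul_id A) ?_⟩
  simp [A]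

end HalfDerivation

end IsDGHVBasis

theorem exists_mul_eq_smul_CL_of_comm {G : AddSubgroup ℂ} {Lg : Type*} [AddCommGroup Lg]
    [Module ℂ Lg] (bas : Module.Basis (DGHVIdx G) ℂ Lg) (mul : Lg →ₗ[ℂ] Lg →ₗ[ℂ] Lg)
    (hcomm : ∀ x y, mul x y = mul y x)
    (h : ∀ z, ∃ A r : ℂ, mul z = A • LinearMap.id + r • (bas.coord (.I 0)).smulRight (bas .CL)) :
    ∃ β : ℂ, ∀ x y, mul x y = (β * bas.repr x (.I 0) * bas.repr y (.I 0)) • bas .CL := by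
  choose A r hAr using h
  have hmul : ∀ z w, mul z w = A z • w + (r z * bas.repr w (.I 0)) • bas .CL := by
    intro z w; rw [hAr z]; simp [mul_smul]
  have hA : ∀ z, A z = A (bas (.L 0)) * bas.repr z (.L 0) := by
    intro z
    simpa [hmul] using congr_arg (bas.repr · (.L 0)) (hcomm z (bas (.L 0)))
  have hAL0 : A (bas (.L 0)) = 0 := by
    simpa [hmul] using congr_arg (bas.repr · .CL) (hcomm (bas (.L 0)) (bas .CL))
  have hA0 : ∀ z, A z = 0 := fun z => by rw [hA, hAL0, zero_mul]
  have hr : ∀ z, r z = r (bas (.I 0)) * bas.repr z (.I 0) := by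
    intro z
    simpa [hmul, hA0] using congr_arg (bas.repr · .CL) (hcomm z (bas (.I 0)))
  exact ⟨r (bas (.I 0)), fun x y => by rw [hmul, hA0, hr]; simp⟩

theorem transposedPoisson_dgHV_neg_one_classification_general
    (G : AddSubgroup ℂ) [Nontrivial G]
    (Lg : Type*) [LieRing Lg] [LieAlgebra ℂ Lg]
    (bas : Module.Basis (DGHVIdx G) ℂ Lg)
    (hLL : ∀ a b : G, ⁅bas (DGHVIdx.L a), bas (DGHVIdx.L b)⁆ =
      ((b : ℂ) - (a : ℂ)) • bas (DGHVIdx.L (a + b)) +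
        (if a + b = 0 then ((a : ℂ) ^ 3 - (a : ℂ)) / 12 else 0) • bas DGHVIdx.CL)
    (hLI : ∀ a b : G, ⁅bas (DGHVIdx.L a), bas (DGHVIdx.I b)⁆ =
      ((a : ℂ) + (b : ℂ)) • bas (DGHVIdx.I (a + b)))
    (hII : ∀ a b : G, ⁅bas (DGHVIdx.I a), bas (DGHVIdx.I b)⁆ = 0)
    (hCL : ∀ x : Lg, ⁅bas DGHVIdx.CL, x⁆ = 0)
    (mul : Lg →ₗ[ℂ] Lg →ₗ[ℂ] Lg)
    (hcomm : ∀ x y : Lg, mul x y = mul y x)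
    (hcompat : ∀ x y z : Lg,
      (2 : ℂ) • mul z ⁅x, y⁆ = ⁅mul z x, y⁆ + ⁅x, mul z y⁆) :
    ∃ β : ℂ,
      mul (bas (DGHVIdx.I 0)) (bas (DGHVIdx.I 0)) = β • bas DGHVIdx.CL ∧
      (∀ a b : G, mul (bas (DGHVIdx.L a)) (bas (DGHVIdx.L b)) = 0) ∧
      (∀ a b : G, mul (bas (DGHVIdx.L a)) (bas (DGHVIdx.I b)) = 0) ∧
      (∀ a : G, mul (bas (DGHVIdx.L a)) (bas DGHVIdx.CL) = 0) ∧
      (∀ a : G, mul (bas (DGHVIdx.I a)) (bas DGHVIdx.CL) = 0) ∧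
      mul (bas DGHVIdx.CL) (bas DGHVIdx.CL) = 0 ∧
      (∀ a b : G, ¬(a = 0 ∧ b = 0) →
        mul (bas (DGHVIdx.I a)) (bas (DGHVIdx.I b)) = 0) := by
  have hB : IsDGHVBasis bas := ⟨hLL, hLI, hII, hCL⟩
  obtain ⟨β, hβ⟩ := exists_mul_eq_smul_CL_of_comm bas mul hcomm fun z =>
    hB.exists_eq_of_isHalfDerivation fun x y => hcompat x y z
  refine ⟨β, by simp [hβ], by simp [hβ], by simp [hβ], by simp [hβ], by simp [hβ], by simp [hβ],
    fun a b hab => ?_⟩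
  rcases not_and_or.1 hab with h | h <;> simp [hβ, h]

/-- every transposed Poisson structure on `g(G, -1)` is given by
`I_0 · I_0 = β C_L` for some `β ∈ ℂ`, all other products of basis vectors
being zero. -/
theorem transposedPoisson_dgHV_neg_one_classification
    (G : AddSubgroup ℂ) [Nontrivial G]
    (Lg : Type*) [LieRing Lg] [LieAlgebra ℂ Lg]
    (bas : Module.Basis (DGHVIdx G) ℂ Lg)
    (hLL : ∀ a b : G, ⁅bas (DGHVIdx.L a), bas (DGHVIdx.L b)⁆ =
      ((b : ℂ) - (a : ℂ)) • bas (DGHVIdx.L (a + b)) +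
        (if a + b = 0 then ((a : ℂ) ^ 3 - (a : ℂ)) / 12 else 0) • bas DGHVIdx.CL)
    (hLI : ∀ a b : G, ⁅bas (DGHVIdx.L a), bas (DGHVIdx.I b)⁆ =
      ((a : ℂ) + (b : ℂ)) • bas (DGHVIdx.I (a + b)))
    (hII : ∀ a b : G, ⁅bas (DGHVIdx.I a), bas (DGHVIdx.I b)⁆ = 0)
    (hCL : ∀ x : Lg, ⁅bas DGHVIdx.CL, x⁆ = 0)
    (mul : Lg →ₗ[ℂ] Lg →ₗ[ℂ] Lg)
    (hcomm : ∀ x y : Lg, mul x y = mul y x)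
    (hassoc : ∀ x y z : Lg, mul (mul x y) z = mul x (mul y z))
    (hcompat : ∀ x y z : Lg,
      (2 : ℂ) • mul z ⁅x, y⁆ = ⁅mul z x, y⁆ + ⁅x, mul z y⁆) :
    ∃ β : ℂ,
      mul (bas (DGHVIdx.I 0)) (bas (DGHVIdx.I 0)) = β • bas DGHVIdx.CL ∧
      (∀ a b : G, mul (bas (DGHVIdx.L a)) (bas (DGHVIdx.L b)) = 0) ∧
      (∀ a b : G, mul (bas (DGHVIdx.L a)) (bas (DGHVIdx.I b)) = 0) ∧
      (∀ a : G, mul (bas (DGHVIdx.L a)) (bas DGHVIdx.CL) = 0) ∧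
      (∀ a : G, mul (bas (DGHVIdx.I a)) (bas DGHVIdx.CL) = 0) ∧
      mul (bas DGHVIdx.CL) (bas DGHVIdx.CL) = 0 ∧
      (∀ a b : G, ¬(a = 0 ∧ b = 0) →
        mul (bas (DGHVIdx.I a)) (bas (DGHVIdx.I b)) = 0) :=
  transposedPoisson_dgHV_neg_one_classification_general G Lg bas hLL hLI hII hCL mul hcomm hcompat
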